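/- For every β > 0, there exists a unique probability distribution π* on Y such that π*(y) = π_ref(y) exp((Pπ*)(y)/β) / Σ_{y'} π_ref(y') exp((Pπ*)(y')/β) for all y ∈ Y; equivalently, the equation θ = θ_ref + (P π_θ)/β has a solution θ ∈ ℝ^{|Y|}, and the induced softmax policy π_θ is the same for all solutions. -/

import Mathlib

/-!
Existence: consider the entropy-regularised game with payoff
`f x y = ⟪y, θ + P x / β⟫ + H(y) - ⟪x, θ⟫ - H(x)` on the simplex. It is concave in `y` and,
because `P + Pᵀ = 1` gives `⟪y, P x⟫ = 1 - ⟪x, P y⟫`, also convex in `x`; so Sion's minimax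
theorem gives a saddle point `(a, b)`. The same identity makes `f x x = 1 / (2β)` constant, so
`f a y ≤ f b b = f a a`: `a` is a best response to itself, and by Gibbs' variational principle
the best response to `a` is `softmax (θ + P a / β)`.

Uniqueness: for two equilibria `p, q`, `log p - log q = P (p - q) / β + c`, and
`⟪p - q, P (p - q)⟫ = 0` since `P - 1/2` is skew-symmetric; hence `∑ (p - q) (log p - log q) = 0`,
a sum of terms that are positive wherever `p ≠ q`.
-/

open Real

/-- Tabular softmax policy. -/
noncomputable def softmax {Y : Type*} [Fintype Y] (θ : Y → ℝ) : Y → ℝ :=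
  fun y => Real.exp (θ y) / ∑ y', Real.exp (θ y')

/-- Kullback–Leibler divergence between distributions on a finite set. -/
noncomputable def KLdiv {Y : Type*} [Fintype Y] (p q : Y → ℝ) : ℝ :=
  ∑ y, p y * Real.log (p y / q y)

/-- `(P π)(y) = ∑ y' P(y, y') π(y')`. -/
noncomputable def matVec {Y : Type*} [Fintype Y] (P : Y → Y → ℝ) (p : Y → ℝ) : Y → ℝ :=
  fun y => ∑ y', P y y' * p y'

/-- The probability simplex over a finite set. -/
def simplex (Y : Type*) [Fintype Y] : Set (Y → ℝ) :=
  {p | (∀ y, 0 ≤ p y) ∧ ∑ y, p y = 1}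

section

open Finset InformationTheory

variable {Y : Type*} [Fintype Y]

section Softmax

variable [Nonempty Y]

lemma sum_exp_pos (θ : Y → ℝ) : 0 < ∑ y, exp (θ y) :=
  sum_pos (fun _ _ => exp_pos _) univ_nonempty

lemma softmax_pos (θ : Y → ℝ) (y : Y) : 0 < softmax θ y :=
  div_pos (exp_pos _) (sum_exp_pos θ)

lemma softmax_mem_simplex (θ : Y → ℝ) : softmax θ ∈ simplex Y := by
  refine ⟨fun y => (softmax_pos θ y).le, ?_⟩
  simp only [softmax, ← sum_div]
  exact div_self (sum_exp_pos θ).ne'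

lemma log_softmax (θ : Y → ℝ) (y : Y) :
    log (softmax θ y) = θ y - log (∑ y', exp (θ y')) := by
  rw [softmax, log_div (exp_pos _).ne' (sum_exp_pos θ).ne', log_exp]

lemma softmax_mul_exp_div_sum (θ u : Y → ℝ) :
    (fun y => softmax θ y * exp (u y) / ∑ y', softmax θ y' * exp (u y'))
      = softmax (fun y => θ y + u y) := by
  have h : ∀ y, softmax θ y * exp (u y) = exp (θ y + u y) / ∑ y', exp (θ y') := fun y => by
    rw [softmax, exp_add]; ring
  funext y
  simp only [h]
  rw [← sum_div, div_div_div_cancel_right₀ (sum_exp_pos θ).ne']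
  rfl

end Softmax

lemma sum_mul_matVec_add_sum_mul_matVec {P : Y → Y → ℝ} (hP : ∀ y y', P y y' + P y' y = 1)
    (u v : Y → ℝ) :
    ∑ y, u y * matVec P v y + ∑ y, v y * matVec P u y = (∑ y, u y) * ∑ y, v y := by
  rw [sum_mul_sum]
  simp only [matVec, mul_sum]
  rw [sum_comm (f := fun y y' => v y * (P y y' * u y')), ← sum_add_distrib]
  refine sum_congr rfl fun y _ => ?_
  rw [← sum_add_distrib]
  refine sum_congr rfl fun y' _ => ?_
  linear_combination u y * v y' * hP y y'

lemma matVec_sub (P : Y → Y → ℝ) (u v : Y → ℝ) (y : Y) :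
    matVec P u y - matVec P v y = matVec P (u - v) y := by
  simp only [matVec, Pi.sub_apply, mul_sub, sum_sub_distrib]

lemma sub_mul_log_sub_log_pos {a b : ℝ} (ha : 0 < a) (hb : 0 < b) (hab : a ≠ b) :
    0 < (a - b) * (log a - log b) := by
  rcases hab.lt_or_gt with h | h
  · exact mul_pos_of_neg_of_neg (sub_neg.2 h) (sub_neg.2 (log_lt_log ha h))
  · exact mul_pos (sub_pos.2 h) (sub_pos.2 (log_lt_log hb h))

/-- Quantal response equilibrium. -/
def IsQRE (θ : Y → ℝ) (P : Y → Y → ℝ) (β : ℝ) (p : Y → ℝ) : Prop :=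
  p = softmax fun y => θ y + matVec P p y / β

namespace IsQRE

variable [Nonempty Y] {θ : Y → ℝ} {P : Y → Y → ℝ} {β : ℝ} {p q : Y → ℝ}

lemma pos (hp : IsQRE θ P β p) (y : Y) : 0 < p y := by
  rw [hp]
  exact softmax_pos _ y

lemma mem_simplex (hp : IsQRE θ P β p) : p ∈ simplex Y := by
  rw [hp]
  exact softmax_mem_simplex _

lemma log_apply (hp : IsQRE θ P β p) (y : Y) :
    log (p y) = θ y + matVec P p y / β - log (∑ y', exp (θ y' + matVec P p y' / β)) := by
  conv_lhs => rw [hp]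
  exact log_softmax _ y

theorem unique (hP : ∀ y y', P y y' + P y' y = 1) (hp : IsQRE θ P β p) (hq : IsQRE θ P β q) :
    p = q := by
  set d := p - q
  have hd : ∑ y, d y = 0 := by simp [d, sum_sub_distrib, hp.mem_simplex.2, hq.mem_simplex.2]
  have hdPd : ∑ y, d y * matVec P d y = 0 := by
    have h := sum_mul_matVec_add_sum_mul_matVec hP d d
    rw [hd, zero_mul] at h
    linarith
  have hzero : ∑ y, d y * (log (p y) - log (q y)) = 0 := by
    set c := log (∑ y', exp (θ y' + matVec P q y' / β))
      - log (∑ y', exp (θ y' + matVec P p y' / β))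
    have h : ∀ y, log (p y) - log (q y) = matVec P d y / β + c := fun y => by
      rw [hp.log_apply, hq.log_apply, ← matVec_sub]
      ring
    simp only [h, mul_add, sum_add_distrib, ← sum_mul, mul_div_assoc', ← sum_div, hdPd, hd]
    simp
  have hnonneg : ∀ y ∈ univ, 0 ≤ d y * (log (p y) - log (q y)) := fun y _ => by
    rcases eq_or_ne (p y) (q y) with h | h
    · simp [d, h]
    · exact (sub_mul_log_sub_log_pos (hp.pos y) (hq.pos y) h).le
  funext y
  by_contra h
  have := (sum_eq_zero_iff_of_nonneg hnonneg).1 hzero y (mem_univ y)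
  exact (sub_mul_log_sub_log_pos (hp.pos y) (hq.pos y) h).ne' this

end IsQRE

noncomputable def freeEnergy (θ p : Y → ℝ) : ℝ :=
  ∑ y, (p y * θ y + negMulLog (p y))

lemma freeEnergy_add (θ u p : Y → ℝ) :
    freeEnergy (fun y => θ y + u y) p = freeEnergy θ p + ∑ y, p y * u y := by
  simp only [freeEnergy, ← sum_add_distrib]
  exact sum_congr rfl fun y _ => by ring

lemma concaveOn_freeEnergy (θ : Y → ℝ) : ConcaveOn ℝ (simplex Y) (freeEnergy θ) := by
  refine ⟨convex_stdSimplex ℝ Y, fun p hp q hq a b ha hb hab => ?_⟩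
  simp only [freeEnergy, smul_eq_mul, mul_sum, ← sum_add_distrib, Pi.add_apply, Pi.smul_apply]
  refine sum_le_sum fun y _ => ?_
  have h := concaveOn_negMulLog.2 (Set.mem_Ici.2 (hp.1 y)) (Set.mem_Ici.2 (hq.1 y)) ha hb hab
  simp only [smul_eq_mul] at h
  linear_combination h

lemma freeEnergy_eq_log_sum_exp_sub [Nonempty Y] (θ : Y → ℝ) {p : Y → ℝ} (hp : p ∈ simplex Y) :
    freeEnergy θ p = log (∑ y, exp (θ y)) - ∑ y, softmax θ y * klFun (p y / softmax θ y) := by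
  have h : ∀ y, softmax θ y * klFun (p y / softmax θ y)
      = p y * log (∑ y', exp (θ y')) + softmax θ y - p y - (p y * θ y + negMulLog (p y)) := by
    intro y
    have hs := (softmax_pos θ y).ne'
    rcases eq_or_ne (p y) 0 with h0 | h0
    · simp [h0, klFun]
    · rw [klFun, negMulLog, log_div h0 hs, log_softmax]
      field_simp
      ring
  simp only [h, sum_sub_distrib, sum_add_distrib, ← sum_mul, hp.2, (softmax_mem_simplex θ).2,
    freeEnergy]
  ring

lemma eq_softmax_of_isMaxOn_freeEnergy [Nonempty Y] {θ p : Y → ℝ} (hp : p ∈ simplex Y)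
    (hmax : IsMaxOn (freeEnergy θ) (simplex Y) p) : p = softmax θ := by
  have hs := softmax_mem_simplex θ
  have hnonneg : ∀ y ∈ univ, 0 ≤ softmax θ y * klFun (p y / softmax θ y) := fun y _ =>
    mul_nonneg (softmax_pos θ y).le (klFun_nonneg (div_nonneg (hp.1 y) (softmax_pos θ y).le))
  have hgap : ∑ y, softmax θ y * klFun (p y / softmax θ y) ≤ 0 := by
    have h := isMaxOn_iff.1 hmax _ hs
    rw [freeEnergy_eq_log_sum_exp_sub θ hp, freeEnergy_eq_log_sum_exp_sub θ hs] at h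
    simp only [div_self (softmax_pos θ _).ne', klFun_one, mul_zero, sum_const_zero] at h
    linarith
  funext y
  have h := (sum_eq_zero_iff_of_nonneg hnonneg).1 (le_antisymm hgap (sum_nonneg hnonneg)) y
    (mem_univ y)
  rwa [mul_eq_zero, or_iff_right (softmax_pos θ y).ne',
    klFun_eq_zero_iff (div_nonneg (hp.1 y) (softmax_pos θ y).le),
    div_eq_one_iff_eq (softmax_pos θ y).ne'] at h

theorem exists_isQRE [Nonempty Y] {P : Y → Y → ℝ} (hP : ∀ y y', P y y' + P y' y = 1)
    (θ : Y → ℝ) (β : ℝ) : ∃ p, IsQRE θ P β p := by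
  set L : (Y → ℝ) → Y → ℝ := fun x y => θ y + matVec P x y / β
  set f : (Y → ℝ) → (Y → ℝ) → ℝ := fun x y => freeEnergy (L x) y - freeEnergy θ x
  have hpayoff (x y : Y → ℝ) :
      f x y = freeEnergy θ y + (∑ i, y i * matVec P x i) / β - freeEnergy θ x := by
    simp only [f, L, freeEnergy_add, mul_div_assoc', ← sum_div]
  have hdiag : ∀ x ∈ simplex Y, f x x = 1 / (2 * β) := fun x hx => by
    have h := sum_mul_matVec_add_sum_mul_matVec hP x x
    rw [hx.2, one_mul] at h
    rw [hpayoff]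
    linear_combination h / (2 * β)
  have hswap : ∀ x ∈ simplex Y, ∀ y ∈ simplex Y,
      f x y = -freeEnergy (L y) x + (freeEnergy θ y + 1 / β) := fun x hx y hy => by
    have h := sum_mul_matVec_add_sum_mul_matVec hP x y
    rw [hx.2, hy.2, one_mul] at h
    simp only [hpayoff, L, freeEnergy_add, mul_div_assoc', ← sum_div]
    linear_combination h / β
  have hS : (simplex Y).Nonempty := ⟨_, softmax_mem_simplex θ⟩
  have hcvx : Convex ℝ (simplex Y) := convex_stdSimplex ℝ Y
  have hcpt : IsCompact (simplex Y) := isCompact_stdSimplex ℝ Y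
  have hlsc : ∀ y ∈ simplex Y, LowerSemicontinuousOn (fun x => f x y) (simplex Y) := fun y _ =>
    (by simp only [hpayoff]; unfold freeEnergy matVec; fun_prop : Continuous fun x => f x y)
      |>.continuousOn.lowerSemicontinuousOn
  have husc : ∀ x ∈ simplex Y, UpperSemicontinuousOn (f x) (simplex Y) := fun x _ =>
    (by unfold f freeEnergy; fun_prop : Continuous (f x)).continuousOn.upperSemicontinuousOn
  have hconvex : ∀ y ∈ simplex Y, QuasiconvexOn ℝ (simplex Y) fun x => f x y := fun y hy =>
    ((concaveOn_freeEnergy (L y)).neg.add_const _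
      |>.congr fun x hx => (hswap x hx y hy).symm).quasiconvexOn
  have hconcave : ∀ x ∈ simplex Y, QuasiconcaveOn ℝ (simplex Y) (f x) := fun x _ =>
    ((concaveOn_freeEnergy (L x)).add_const _).quasiconcaveOn
  obtain ⟨a, ha, b, hb, hab⟩ :=
    Sion.exists_isSaddlePointOn hS hcvx hcpt hlsc hconvex hcvx hS hcpt husc hconcave
  refine ⟨a, eq_softmax_of_isMaxOn_freeEnergy ha (isMaxOn_iff.2 fun y hy => ?_)⟩
  have h := hab b hb y hy
  rw [hdiag b hb, ← hdiag a ha] at h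
  simpa [f] using h

end

theorem qre_exists_unique_general
    {Y : Type*} [Fintype Y] (hY : 2 ≤ Fintype.card Y)
    (P : Y → Y → ℝ)
    (hPsum : ∀ y y', P y y' + P y' y = 1)
    (θref : Y → ℝ) (β : ℝ) :
    (∃! p : Y → ℝ, p ∈ simplex Y ∧ p = fun y =>
        softmax θref y * Real.exp (matVec P p y / β)
          / ∑ y', softmax θref y' * Real.exp (matVec P p y' / β))
      ∧ (∃ θ : Y → ℝ, θ = fun y => θref y + matVec P (softmax θ) y / β)
      ∧ (∀ θ₁ θ₂ : Y → ℝ,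
          (θ₁ = fun y => θref y + matVec P (softmax θ₁) y / β) →
          (θ₂ = fun y => θref y + matVec P (softmax θ₂) y / β) →
          softmax θ₁ = softmax θ₂) := by
  have : Nonempty Y := Fintype.card_pos_iff.1 (by omega)
  have hQRE (p : Y → ℝ) : (p = fun y => softmax θref y * exp (matVec P p y / β)
      / ∑ y', softmax θref y' * exp (matVec P p y' / β)) ↔ IsQRE θref P β p := by
    rw [IsQRE, softmax_mul_exp_div_sum]
  obtain ⟨p, hp⟩ := exists_isQRE hPsum θref β
  exact ⟨⟨p, ⟨hp.mem_simplex, (hQRE p).2 hp⟩, fun q hq => ((hQRE q).1 hq.2).unique hPsum hp⟩,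
    ⟨_, by rw [← hp]⟩,
    fun θ₁ θ₂ h₁ h₂ => IsQRE.unique hPsum (congrArg softmax h₁) (congrArg softmax h₂)⟩

/-- for every `β > 0` there is a unique distribution `π*` with
`π*(y) ∝ π_ref(y) exp((Pπ*)(y)/β)`; equivalently the equation `θ = θ_ref + P π_θ / β` has a
solution, and all solutions induce the same softmax policy. -/
theorem qre_exists_unique
    {Y : Type*} [Fintype Y] (hY : 2 ≤ Fintype.card Y)
    (P : Y → Y → ℝ)
    (hP0 : ∀ y y', 0 ≤ P y y') (hP1 : ∀ y y', P y y' ≤ 1)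
    (hPsum : ∀ y y', P y y' + P y' y = 1)
    (θref : Y → ℝ) (β : ℝ) (hβ : 0 < β) :
    (∃! p : Y → ℝ, p ∈ simplex Y ∧ p = fun y =>
        softmax θref y * Real.exp (matVec P p y / β)
          / ∑ y', softmax θref y' * Real.exp (matVec P p y' / β))
      ∧ (∃ θ : Y → ℝ, θ = fun y => θref y + matVec P (softmax θ) y / β)
      ∧ (∀ θ₁ θ₂ : Y → ℝ,
          (θ₁ = fun y => θref y + matVec P (softmax θ₁) y / β) →
          (θ₂ = fun y => θref y + matVec P (softmax θ₂) y / β) →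
          softmax θ₁ = softmax θ₂) :=
  qre_exists_unique_general hY P hPsum θref β
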